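/- arXiv:1703.06227 — 3 statements merged into one kernel-verified Lean document; each statement's English description precedes it below -/
import Mathlib

section
/- Let G be a finite connected simple graph on n ≥ 2 vertices whose discriminative diameter satisfies DD(G) ≤ c for some constant c > 0, and let X_1, …, X_T be vertices of G chosen independently and uniformly at random with β = (1/T) · Σ_{t=1}^{T} DC(X_t). Then for every ε > 0 and δ ∈ (0,1), if T ≥ c²·ln(2/δ)/(2ε²), the probability that |ADPL(G) − β| > ε is at most δ. -/
/-- The number of shortest paths between `v` and `u`: walks from `v` to `u`
whose length equals the graph distance (such walks are exactly the shortest paths). -/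
noncomputable def nsp {V : Type*} (G : SimpleGraph V) (v u : V) : ℕ :=
  Nat.card {p : G.Walk v u // p.length = G.dist v u}

/-- The discriminative distance `dd(v,u) = d(v,u) / σ(v,u)`. -/
noncomputable def dd {V : Type*} (G : SimpleGraph V) (v u : V) : ℝ :=
  (G.dist v u : ℝ) / (nsp G v u : ℝ)

/-- Discriminative closeness `DC(v) = (1/(n-1)) ⬝ Σ_{u ≠ v} dd(v,u)`. -/
noncomputable def DC {V : Type*} [Fintype V] [DecidableEq V] (G : SimpleGraph V) (v : V) : ℝ :=
  (1 / ((Fintype.card V : ℝ) - 1)) * ∑ u ∈ Finset.univ.erase v, dd G v u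

/-- Average discriminative path length `ADPL(G) = (1/(n(n-1))) ⬝ Σ_v Σ_{u ≠ v} dd(v,u)`. -/
noncomputable def ADPL {V : Type*} [Fintype V] [DecidableEq V] (G : SimpleGraph V) : ℝ :=
  (1 / ((Fintype.card V : ℝ) * ((Fintype.card V : ℝ) - 1))) *
    ∑ v : V, ∑ u ∈ Finset.univ.erase v, dd G v u

/-!
Every `DC v` lies in `[0, c]`, and the average of `DC` over the vertices is exactly `ADPL G`.
Counting tuples `ω : Fin T → V` is the uniform measure on `Fin T → V`, which is the product of
the uniform measures on `V`, so `β` is the empirical mean of `T` independent samples of a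
`[0, c]`-valued variable with mean `ADPL G`. Hoeffding's inequality bounds each of the two tails
by `exp (-2 T ε² / c²)`, and the lower bound on `T` makes the sum of the two at most `δ`.
-/

open MeasureTheory ProbabilityTheory Real

section SamplingWithReplacement

variable {Ω : Type*} [Fintype Ω] [MeasurableSpace Ω] [MeasurableSingletonClass Ω]

lemma measureReal_uniformOn_univ (s : Set Ω) :
    (uniformOn (Set.univ : Set Ω)).real s = Nat.card s / Fintype.card Ω := by
  rw [measureReal_def, uniformOn_univ, Measure.count_apply_finite _ s.toFinite]
  simp [ENNReal.toReal_div, Set.ncard_eq_toFinset_card _ s.toFinite]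

lemma integral_uniformOn_univ (f : Ω → ℝ) :
    ∫ x, f x ∂uniformOn (Set.univ : Set Ω) = (∑ x, f x) / Fintype.card Ω := by
  simp [uniformOn, ProbabilityTheory.cond, integral_smul_measure, div_eq_inv_mul]

lemma uniformOn_univ_pi (ι : Type*) [Fintype ι] :
    uniformOn (Set.univ : Set (ι → Ω)) =
      Measure.pi fun _ ↦ uniformOn (Set.univ : Set Ω) := by
  rw [← Set.pi_univ, uniformOn_pi]

variable [Nonempty Ω]

lemma measureReal_uniformOn_sum_sub_mean_ge_le {f : Ω → ℝ} {a b : ℝ}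
    (hf : ∀ x, f x ∈ Set.Icc a b) (T : ℕ) {r : ℝ} (hr : 0 ≤ r) :
    (uniformOn (Set.univ : Set (Fin T → Ω))).real
        {ω | r ≤ ∑ t, (f (ω t) - (∑ x, f x) / Fintype.card Ω)}
      ≤ exp (-2 * r ^ 2 / (T * (b - a) ^ 2)) := by
  set m := (∑ x, f x) / Fintype.card Ω
  set μ : Measure (Fin T → Ω) := Measure.pi fun _ ↦ uniformOn Set.univ
  have hindep : iIndepFun (fun t ω ↦ f (ω t) - m) μ :=
    iIndepFun_pi (X := fun _ x ↦ f x - m) fun _ ↦ .of_discrete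
  have hsubG (t : Fin T) :
      HasSubgaussianMGF (fun ω ↦ f (ω t) - m) ((‖b - a‖₊ / 2) ^ 2) μ := by
    have := hasSubgaussianMGF_of_mem_Icc (X := fun ω : Fin T → Ω ↦ f (ω t)) (μ := μ)
      .of_discrete (ae_of_all _ fun ω ↦ hf (ω t))
    rwa [integral_comp_eval .of_discrete, integral_uniformOn_univ] at this
  rw [uniformOn_univ_pi]
  refine (HasSubgaussianMGF.measure_sum_ge_le_of_iIndepFun hindep (fun t _ ↦ hsubG t)
    hr).trans_eq ?_
  congr 1
  push_cast
  simp only [Finset.sum_const, Finset.card_univ, Fintype.card_fin, nsmul_eq_mul,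
    Real.norm_eq_abs, div_pow, sq_abs]
  rw [show (2 : ℝ) * (T * ((b - a) ^ 2 / 2 ^ 2)) = T * (b - a) ^ 2 / 2 by ring,
    div_div_eq_mul_div]
  ring

lemma sum_sub_const_eq_mul_mean_sub (T : ℕ) (g : Fin T → ℝ) (m : ℝ) :
    ∑ t, (g t - m) = T * ((∑ t, g t) / T - m) := by
  rcases Nat.eq_zero_or_pos T with rfl | hT
  · simp
  · rw [Finset.sum_sub_distrib, Finset.sum_const, Finset.card_univ, Fintype.card_fin,
      nsmul_eq_mul, mul_sub, mul_div_cancel₀ _ (by positivity)]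

lemma measureReal_uniformOn_abs_mean_sub_mean_ge_le {f : Ω → ℝ} {a b : ℝ}
    (hf : ∀ x, f x ∈ Set.Icc a b) (T : ℕ) {ε : ℝ} (hε : 0 ≤ ε) :
    (uniformOn (Set.univ : Set (Fin T → Ω))).real
        {ω | ε ≤ |(∑ t, f (ω t)) / T - (∑ x, f x) / Fintype.card Ω|}
      ≤ 2 * exp (-2 * T * ε ^ 2 / (b - a) ^ 2) := by
  set m := (∑ x, f x) / Fintype.card Ω
  have hTε : 0 ≤ (T : ℝ) * ε := by positivity
  have hupper := measureReal_uniformOn_sum_sub_mean_ge_le hf T hTε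
  have hlower := measureReal_uniformOn_sum_sub_mean_ge_le (f := fun x ↦ -f x) (a := -b) (b := -a)
    (fun x ↦ ⟨neg_le_neg (hf x).2, neg_le_neg (hf x).1⟩) T hTε
  have hexp : -2 * (T * ε) ^ 2 / (T * (b - a) ^ 2) = -2 * T * ε ^ 2 / (b - a) ^ 2 := by
    rcases Nat.eq_zero_or_pos T with rfl | hT
    · simp
    · field_simp
  simp only [Finset.sum_neg_distrib, neg_div, sub_neg_eq_add, neg_add_eq_sub, hexp]
    at hupper hlower
  calc _ ≤ (uniformOn Set.univ).real ({ω : Fin T → Ω | T * ε ≤ ∑ t, (f (ω t) - m)} ∪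
          {ω | T * ε ≤ ∑ t, (m - f (ω t))}) := by
        refine measureReal_mono fun ω hω ↦ ?_
        have hdev : T * ε ≤ |∑ t, (f (ω t) - m)| := by
          rw [sum_sub_const_eq_mul_mean_sub, abs_mul, Nat.abs_cast]
          exact mul_le_mul_of_nonneg_left hω (Nat.cast_nonneg T)
        rcases le_abs'.mp hdev with h | h
        · right
          have hneg : ∑ t, (m - f (ω t)) = -∑ t, (f (ω t) - m) := by
            simp only [← Finset.sum_neg_distrib, neg_sub]
          exact (le_neg.mpr h).trans_eq hneg.symm
        · exact Or.inl h
    _ ≤ _ := measureReal_union_le _ _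
    _ ≤ _ := by linarith

end SamplingWithReplacement

section DiscriminativeCloseness

variable {V : Type*} (G : SimpleGraph V)

lemma dd_nonneg (v u : V) : 0 ≤ dd G v u := by
  unfold dd
  positivity

variable [Fintype V] [DecidableEq V]

lemma DC_nonneg (v : V) : 0 ≤ DC G v := by
  have : (1 : ℝ) ≤ Fintype.card V := by exact_mod_cast Fintype.card_pos_iff.mpr ⟨v⟩
  exact mul_nonneg (one_div_nonneg.mpr (by linarith))
    (Finset.sum_nonneg fun u _ ↦ dd_nonneg G v u)

lemma DC_le {c : ℝ} (hc : 0 ≤ c) (hdd : ∀ v u, v ≠ u → dd G v u ≤ c) (v : V) :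
    DC G v ≤ c := by
  set k : ℝ := (Fintype.card V : ℝ) - 1
  have hcard : ((Finset.univ.erase v).card : ℝ) = k := by
    rw [Finset.card_erase_of_mem (Finset.mem_univ v), Finset.card_univ,
      Nat.cast_sub (Fintype.card_pos_iff.mpr ⟨v⟩), Nat.cast_one]
  have hsum : ∑ u ∈ Finset.univ.erase v, dd G v u ≤ k * c := by
    rw [← hcard, ← nsmul_eq_mul, ← Finset.sum_const]
    exact Finset.sum_le_sum fun u hu ↦ hdd v u (Finset.ne_of_mem_erase hu).symm
  have hk : 0 ≤ k := by
    rw [← hcard]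
    positivity
  calc DC G v ≤ 1 / k * (k * c) := mul_le_mul_of_nonneg_left hsum (one_div_nonneg.mpr hk)
    _ ≤ c := by
        rcases eq_or_ne k 0 with hk0 | hk0
        · simpa [hk0] using hc
        · rw [← mul_assoc, one_div_mul_cancel hk0, one_mul]

lemma sum_DC_div_card_eq_ADPL : (∑ v, DC G v) / Fintype.card V = ADPL G := by
  simp only [DC, ADPL, ← Finset.mul_sum, one_div, mul_inv]
  ring

end DiscriminativeCloseness

theorem stmt5_general {V : Type*} [Fintype V] [DecidableEq V] (G : SimpleGraph V)
    (hconn : G.Connected)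
    (c : ℝ) (hc : 0 < c) (hDD : ∀ v u : V, v ≠ u → dd G v u ≤ c)
    (T : ℕ) (ε : ℝ) (hε : 0 < ε) (δ : ℝ) (hδ0 : 0 < δ)
    (hTbound : c ^ 2 * Real.log (2 / δ) / (2 * ε ^ 2) ≤ (T : ℝ)) :
    (Nat.card {ω : Fin T → V |
        ε < |ADPL G - (1 / (T : ℝ)) * ∑ t : Fin T, DC G (ω t)|} : ℝ) /
      (Fintype.card (Fin T → V) : ℝ) ≤ δ := by
  let : MeasurableSpace V := ⊤
  have : Nonempty V := hconn.nonempty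
  have hDC (v : V) : DC G v ∈ Set.Icc 0 c := ⟨DC_nonneg G v, DC_le G hc.le hDD v⟩
  have hlog : log (2 / δ) ≤ 2 * T * ε ^ 2 / c ^ 2 := by
    rw [div_le_iff₀ (by positivity)] at hTbound
    rw [le_div_iff₀ (by positivity)]
    linarith
  have htail : 2 * exp (-2 * T * ε ^ 2 / (c - 0) ^ 2) ≤ δ := by
    calc 2 * exp (-2 * T * ε ^ 2 / (c - 0) ^ 2) ≤ 2 * exp (-log (2 / δ)) := by
          rw [sub_zero, neg_mul, neg_mul, neg_div]
          gcongr
      _ = δ := by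
          rw [exp_neg, exp_log (by positivity)]
          field_simp
  rw [← measureReal_uniformOn_univ]
  refine (measureReal_mono fun ω hω ↦ ?_).trans
    ((measureReal_uniformOn_abs_mean_sub_mean_ge_le hDC T hε.le).trans htail)
  change ε < |ADPL G - 1 / T * ∑ t, DC G (ω t)| at hω
  change ε ≤ |(∑ t, DC G (ω t)) / T - (∑ v, DC G v) / Fintype.card V|
  rw [sum_DC_div_card_eq_ADPL, abs_sub_comm, div_eq_inv_mul, ← one_div]
  exact hω.le

/-- If the discriminative diameter of `G` is bounded by a constant `c > 0`
(i.e. `dd(v,u) ≤ c` for all distinct `v,u`), then for `T ≥ c² ln(2/δ)/(2ε²)` vertices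
chosen independently and uniformly at random (i.e. `ω : Fin T → V` drawn uniformly,
`X_t = ω t`) and `β(ω) = (1/T) Σ_t DC(X_t)`, the probability (number of favourable
outcomes divided by the total number of outcomes) that `|ADPL(G) − β| > ε` is at most `δ`. -/
theorem stmt5 {V : Type*} [Fintype V] [DecidableEq V] (G : SimpleGraph V)
    (hconn : G.Connected) (hn : 2 ≤ Fintype.card V)
    (c : ℝ) (hc : 0 < c) (hDD : ∀ v u : V, v ≠ u → dd G v u ≤ c)
    (T : ℕ) (hT : 0 < T) (ε : ℝ) (hε : 0 < ε) (δ : ℝ) (hδ0 : 0 < δ) (hδ1 : δ < 1)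
    (hTbound : c ^ 2 * Real.log (2 / δ) / (2 * ε ^ 2) ≤ (T : ℝ)) :
    (Nat.card {ω : Fin T → V |
        ε < |ADPL G - (1 / (T : ℝ)) * ∑ t : Fin T, DC G (ω t)|} : ℝ) /
      (Fintype.card (Fin T → V) : ℝ) ≤ δ :=
  stmt5_general G hconn c hc hDD T ε hε δ hδ0 hTbound
end

section
/- Let G be a finite connected simple graph and let v, w, u be pairwise distinct vertices such that d(v,u) = d(v,w) + d(w,u) (i.e., w lies on a shortest path from v to u). Then the discriminative distance satisfies dd(v,u) ≤ dd(v,w) + dd(w,u). -/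
lemma append_inj' {V : Type*} {G : SimpleGraph V} {v w u : V} :
    ∀ {p p' : G.Walk v w} {q q' : G.Walk w u},
      p.length = p'.length → p.append q = p'.append q' → p = p' ∧ q = q' := by
  intro p
  induction p with
  | nil =>
    intro p' q q' hl h
    have : p' = SimpleGraph.Walk.nil := by
      cases p' with
      | nil => rfl
      | cons _ _ => simp at hl
    subst this
    simpa using h
  | cons h1 t ih =>
    intro p' q q' hl h
    cases p' with
    | nil => simp at hl
    | cons h2 t2 =>
      simp only [SimpleGraph.Walk.cons_append] at h
      injection h with e1 e2 e3 e4
      subst e2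
      obtain ⟨rfl, rfl⟩ := ih (by simpa using hl) (eq_of_heq e4)
      exact ⟨rfl, rfl⟩



theorem stmt9 {V : Type*} [Fintype V] (G : SimpleGraph V) (hconn : G.Connected)
    (v w u : V) (hvw : v ≠ w) (hvu : v ≠ u) (hwu : w ≠ u)
    (h : G.dist v u = G.dist v w + G.dist w u) :
    dd G v u ≤ dd G v w + dd G w u := by
  classical
  -- positivity of nsp
  have hpos : ∀ a b : V, 0 < nsp G a b := by
    intro a b
    obtain ⟨p, hp⟩ := hconn.exists_walk_length_eq_dist a b
    rw [nsp, Nat.card_pos_iff]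
    exact ⟨⟨⟨p, hp⟩⟩, Finite.of_fintype _⟩
  -- multiplicativity
  have hmul : nsp G v w * nsp G w u ≤ nsp G v u := by
    rw [nsp, nsp, nsp, ← Nat.card_prod]
    apply Nat.card_le_card_of_injective
      (f := fun pq : {p : G.Walk v w // p.length = G.dist v w} ×
          {p : G.Walk w u // p.length = G.dist w u} =>
        (⟨pq.1.1.append pq.2.1, by
          rw [SimpleGraph.Walk.length_append, pq.1.2, pq.2.2, h]⟩ :
          {p : G.Walk v u // p.length = G.dist v u}))
    intro ⟨⟨p1, hp1⟩, ⟨q1, hq1⟩⟩ ⟨⟨p2, hp2⟩, ⟨q2, hq2⟩⟩ hpq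
    simp only [Subtype.mk.injEq, Prod.mk.injEq] at hpq ⊢
    exact append_inj' (hp1.trans hp2.symm) hpq
  set a := G.dist v w
  set b := G.dist w u
  set s1 := nsp G v w
  set s2 := nsp G w u
  set s := nsp G v u
  have h1 : (0:ℝ) < s1 := by exact_mod_cast hpos v w
  have h2 : (0:ℝ) < s2 := by exact_mod_cast hpos w u
  have h1' : (1:ℝ) ≤ s1 := by exact_mod_cast hpos v w
  have h2' : (1:ℝ) ≤ s2 := by exact_mod_cast hpos w u
  have hs : (s1 * s2 : ℝ) ≤ s := by exact_mod_cast hmul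
  rw [dd, dd, dd, h]
  push_cast
  have step1 : ((a:ℝ) + b) / s ≤ ((a:ℝ) + b) / (s1 * s2) := by
    apply div_le_div_of_nonneg_left _ (by positivity) hs
    positivity
  refine step1.trans ?_
  rw [add_div]
  gcongr
  · nlinarith
  · nlinarith
end

section
/- There exists a finite connected simple graph G and pairwise distinct vertices v, w, u of G such that d(v,u) = d(v,w) + d(w,u) (i.e., w lies on a shortest path from v to u) and the discriminative distance satisfies the strict inequality dd(v,u) < dd(v,w) + dd(w,u). -/
namespace SimpleGraph

variable {V : Type*} {G : SimpleGraph V} {v w w' u : V}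

lemma Walk.eq_cons_nil_of_length_eq_one (h : G.Adj v u) :
    ∀ {p : G.Walk v u}, p.length = 1 → p = .cons h .nil
  | .cons _ .nil, _ => rfl
  | .cons _ (.cons _ _), hp => by simp at hp

lemma nsp_eq_one_of_adj (h : G.Adj v u) : nsp G v u = 1 := by
  rw [nsp, Nat.card_eq_one_iff_unique, dist_eq_one_iff_adj.mpr h]
  refine ⟨⟨fun ⟨p, hp⟩ ⟨q, hq⟩ => ?_⟩, ⟨⟨.cons h .nil, rfl⟩⟩⟩
  rw [Subtype.mk.injEq, Walk.eq_cons_nil_of_length_eq_one h hp,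
    Walk.eq_cons_nil_of_length_eq_one h hq]

lemma dd_eq_one_of_adj (h : G.Adj v u) : dd G v u = 1 := by
  simp [dd, dist_eq_one_iff_adj.mpr h, nsp_eq_one_of_adj h]

lemma dist_eq_two_of_adj_of_adj (hvu : v ≠ u) (hn : ¬G.Adj v u) (hvw : G.Adj v w)
    (hwu : G.Adj w u) : G.dist v u = 2 := by
  rw [dist, edist_eq_two_iff.mpr ⟨hvu, hn, w, hvw, hwu.symm⟩]
  rfl

lemma two_le_nsp_of_ne [G.LocallyFinite] {p q : G.Walk v u} (hp : p.length = G.dist v u)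
    (hq : q.length = G.dist v u) (hpq : p ≠ q) : 2 ≤ nsp G v u := by
  classical
  rw [nsp, Nat.card_eq_fintype_card]
  exact Fintype.one_lt_card_iff_nontrivial.mpr ⟨⟨p, hp⟩, ⟨q, hq⟩, by simpa using hpq⟩

lemma dd_lt_dd_add_dd_of_two_commonNeighbors [G.LocallyFinite] (hvu : v ≠ u)
    (hn : ¬G.Adj v u) (hvw : G.Adj v w) (hwu : G.Adj w u) (hvw' : G.Adj v w')
    (hw'u : G.Adj w' u) (hww' : w ≠ w') : dd G v u < dd G v w + dd G w u := by
  have hdist : G.dist v u = 2 := dist_eq_two_of_adj_of_adj hvu hn hvw hwu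
  have hnsp : (2 : ℝ) ≤ nsp G v u := by
    have hne : (Walk.cons hvw (.cons hwu .nil)) ≠ .cons hvw' (.cons hw'u .nil) := fun h => by
      simpa [hww'] using congrArg Walk.support h
    exact_mod_cast two_le_nsp_of_ne (by simp [hdist]) (by simp [hdist]) hne
  calc dd G v u = 2 / nsp G v u := by rw [dd, hdist, Nat.cast_ofNat]
    _ ≤ 2 / 2 := by gcongr
    _ < dd G v w + dd G w u := by rw [dd_eq_one_of_adj hvw, dd_eq_one_of_adj hwu]; norm_num

end SimpleGraph

theorem stmt10 :
    ∃ (V : Type) (_ : Fintype V) (G : SimpleGraph V) (v w u : V),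
      G.Connected ∧ v ≠ w ∧ v ≠ u ∧ w ≠ u ∧
      G.dist v u = G.dist v w + G.dist w u ∧
      dd G v u < dd G v w + dd G w u := by
  open SimpleGraph in
  have h01 : (cycleGraph 4).Adj 0 1 := by decide
  have h12 : (cycleGraph 4).Adj 1 2 := by decide
  have h03 : (cycleGraph 4).Adj 0 3 := by decide
  have h32 : (cycleGraph 4).Adj 3 2 := by decide
  have h02 : ¬(cycleGraph 4).Adj 0 2 := by decide
  refine ⟨Fin 4, inferInstance, cycleGraph 4, 0, 1, 2, cycleGraph_connected, by decide,
    by decide, by decide, ?_, dd_lt_dd_add_dd_of_two_commonNeighbors (by decide) h02 h01 h12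
      h03 h32 (by decide)⟩
  rw [dist_eq_two_of_adj_of_adj (by decide) h02 h01 h12, dist_eq_one_iff_adj.mpr h01,
    dist_eq_one_iff_adj.mpr h12]
end
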